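/- Let A be a commutative ring, I and L ideals of A, and J = I + L. Then every A-linear map f : I → A/J vanishes on I² + I·L, so Hom_A(I/(I²+I·L), A/J) is naturally isomorphic to Hom_A(I, A/J); moreover the image of the restriction map Hom_A((I+L)/(I²+L), A/J) → Hom_A(I/(I²+I·L), A/J) corresponds under this identification to the submodule of those f ∈ Hom_A(I, A/J) with f(I ∩ L) = 0. Consequently Q(L,I) is isomorphic as an A-module to Hom_A(I, A/J) modulo the submodule { f : f(I ∩ L) = 0 }. -/

import Mathlib

open Submodule

variable (A : Type*) [CommRing A]

/-- The natural map `I/(I² + I·L) → (I+L)/(I² + L)` induced by the inclusion `I ⊆ I + L`. -/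
noncomputable def qIota (L I : Ideal A) :
    (↥I ⧸ Submodule.comap I.subtype (I ^ 2 + I * L)) →ₗ[A]
      (↥(I + L) ⧸ Submodule.comap (I + L).subtype (I ^ 2 + L)) :=
  Submodule.liftQ _
    ((Submodule.comap (I + L).subtype (I ^ 2 + L)).mkQ.comp
      (Submodule.inclusion (le_sup_left : I ≤ I + L)))
    (by
      intro x hx
      have hle : I ^ 2 + I * L ≤ I ^ 2 + L := by
        rw [Submodule.add_eq_sup, Submodule.add_eq_sup]
        exact sup_le_sup_left (Ideal.mul_le_inf.trans inf_le_right) _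
      simp only [LinearMap.mem_ker, LinearMap.comp_apply, Submodule.mkQ_apply,
        Submodule.Quotient.mk_eq_zero, Submodule.mem_comap, Submodule.coe_subtype,
        Submodule.coe_inclusion]
      exact hle hx)

/-- The restriction map `Hom_A((I+L)/(I²+L), A/(I+L)) → Hom_A(I/(I²+I·L), A/(I+L))`. -/
noncomputable def qRes (L I : Ideal A) :
    ((↥(I + L) ⧸ Submodule.comap (I + L).subtype (I ^ 2 + L)) →ₗ[A] A ⧸ (I + L)) →ₗ[A]
      ((↥I ⧸ Submodule.comap I.subtype (I ^ 2 + I * L)) →ₗ[A] A ⧸ (I + L)) :=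
  LinearMap.lcomp A (A ⧸ (I + L)) (qIota A L I)

/-- The module `Q(L,I)`: the cokernel of the restriction map
`Hom_A((I+L)/(I²+L), A/(I+L)) → Hom_A(I/(I²+I·L), A/(I+L))`. -/
noncomputable abbrev Qmod (L I : Ideal A) :=
  ((↥I ⧸ Submodule.comap I.subtype (I ^ 2 + I * L)) →ₗ[A] A ⧸ (I + L)) ⧸
    LinearMap.range (qRes A L I)

/-- The submodule of `Hom_A(I, A/(I+L))` consisting of the maps vanishing on `I ∩ L`. -/
def vanishOnInter (L I : Ideal A) : Submodule A (↥I →ₗ[A] A ⧸ (I + L)) where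
  carrier := {f | ∀ x : ↥I, (x : A) ∈ I ⊓ L → f x = 0}
  add_mem' := by
    intro f g hf hg x hx
    rw [LinearMap.add_apply, hf x hx, hg x hx, add_zero]
  zero_mem' := by intro x hx; rfl
  smul_mem' := by
    intro a f hf x hx
    rw [LinearMap.smul_apply, hf x hx, smul_zero]


section Aux
variable {A : Type*} [CommRing A]

theorem vanish_aux (I L : Ideal A) (f : ↥I →ₗ[A] A ⧸ (I + L))
    (x : ↥I) (hx : (x : A) ∈ I ^ 2 + I * L) : f x = 0 := by
  have hx' : x ∈ (I + L) • (⊤ : Submodule A ↥I) := by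
    have hmap : Submodule.map I.subtype ((I + L) • (⊤ : Submodule A ↥I)) = I ^ 2 + I * L := by
      rw [Submodule.map_smul'', Submodule.map_top, Submodule.range_subtype,
        Ideal.smul_eq_mul, add_mul, ← pow_two, mul_comm L I]
    have : (x : A) ∈ Submodule.map I.subtype ((I + L) • (⊤ : Submodule A ↥I)) := by
      rw [hmap]; exact hx
    obtain ⟨y, hy, hyx⟩ := this
    have : y = x := Subtype.ext hyx
    rwa [this] at hy
  refine Submodule.smul_induction_on hx' (fun r hr m _ => ?_) (fun y z hy hz => by
    rw [map_add, hy, hz, add_zero])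
  rw [map_smul]
  obtain ⟨q, hq⟩ := Submodule.Quotient.mk_surjective _ (f m)
  rw [← hq, ← Submodule.Quotient.mk_smul, Submodule.Quotient.mk_eq_zero]
  exact Ideal.mul_mem_right q _ hr

/-- Extension of `f : I → A/(I+L)` vanishing on `I ∩ L` to `I + L`. -/
noncomputable def extHom (I L : Ideal A) (f : ↥I →ₗ[A] A ⧸ (I + L))
    (hf : ∀ x : ↥I, (x : A) ∈ I ⊓ L → f x = 0) : ↥(I + L) →ₗ[A] A ⧸ (I + L) :=
  ((Submodule.liftQ (comap I.subtype (I ⊓ L)) f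
      (fun x hx => LinearMap.mem_ker.mpr (hf x hx))).comp
    (LinearMap.quotientInfEquivSupQuotient I L).symm.toLinearMap).comp
      (comap (I ⊔ L).subtype L).mkQ

theorem extHom_incl (I L : Ideal A) (f : ↥I →ₗ[A] A ⧸ (I + L))
    (hf : ∀ x : ↥I, (x : A) ∈ I ⊓ L → f x = 0) (x : ↥I) :
    extHom I L f hf (Submodule.inclusion (le_sup_left : I ≤ I ⊔ L) x) = f x := by
  have h1 : (LinearMap.quotientInfEquivSupQuotient I L).symm
      (Submodule.Quotient.mk (Submodule.inclusion (le_sup_left : I ≤ I ⊔ L) x))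
      = Submodule.Quotient.mk x := by
    rw [LinearMap.quotientInfEquivSupQuotient_symm_apply_left I L _ x.2]
    exact congrArg _ (Subtype.ext rfl)
  simp only [extHom, LinearMap.comp_apply, Submodule.mkQ_apply, LinearEquiv.coe_coe, h1,
    Submodule.liftQ_apply]
  exact (congrArg (Submodule.liftQ (comap I.subtype (I ⊓ L)) f
    (fun x hx => LinearMap.mem_ker.mpr (hf x hx))) h1).trans (Submodule.liftQ_apply _ _ _)

theorem extHom_right (I L : Ideal A) (f : ↥I →ₗ[A] A ⧸ (I + L))
    (hf : ∀ x : ↥I, (x : A) ∈ I ⊓ L → f x = 0) (z : ↥(I ⊔ L)) (hz : (z : A) ∈ L) :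
    extHom I L f hf z = 0 := by
  simp only [extHom, LinearMap.comp_apply, Submodule.mkQ_apply]
  rw [(Submodule.Quotient.mk_eq_zero _).mpr (by exact hz : z ∈ comap (I ⊔ L).subtype L),
    map_zero]

theorem extHom_kills (I L : Ideal A) (f : ↥I →ₗ[A] A ⧸ (I + L))
    (hf : ∀ x : ↥I, (x : A) ∈ I ⊓ L → f x = 0) (z : ↥(I + L))
    (hz : (z : A) ∈ I ^ 2 + L) : extHom I L f hf z = 0 := by
  rw [Submodule.add_eq_sup, Submodule.mem_sup] at hz
  obtain ⟨p, hp, y, hy, hpy⟩ := hz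
  have hpI : p ∈ I := (Ideal.pow_le_self two_ne_zero) hp
  have hyJ : y ∈ I ⊔ L := Submodule.mem_sup_right hy
  have hzeq : z = Submodule.inclusion (le_sup_left : I ≤ I ⊔ L) ⟨p, hpI⟩ + ⟨y, hyJ⟩ :=
    Subtype.ext (by simp [hpy.symm])
  rw [hzeq, map_add, extHom_incl, extHom_right I L f hf _ hy, add_zero]
  exact vanish_aux I L f ⟨p, hpI⟩ (by
    rw [Submodule.add_eq_sup]; exact Submodule.mem_sup_left hp)

end Aux

section Aux2
variable {A : Type*} [CommRing A]

theorem mem_vanishOnInter {L I : Ideal A} {f : ↥I →ₗ[A] A ⧸ (I + L)} :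
    f ∈ vanishOnInter A L I ↔ ∀ x : ↥I, (x : A) ∈ I ⊓ L → f x = 0 :=
  Iff.rfl

theorem fibers_bij (I L : Ideal A) :
    Function.Bijective
      (LinearMap.lcomp A (A ⧸ (I + L)) (Submodule.comap I.subtype (I ^ 2 + I * L)).mkQ) := by
  constructor
  · intro g₁ g₂ h
    rw [LinearMap.lcomp_apply', LinearMap.lcomp_apply'] at h
    exact (LinearMap.cancel_right (Submodule.mkQ_surjective _)).mp h
  · intro f
    refine ⟨Submodule.liftQ _ f (fun x hx => LinearMap.mem_ker.mpr (vanish_aux I L f x hx)), ?_⟩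
    rw [LinearMap.lcomp_apply']
    exact Submodule.liftQ_mkQ _ _ _

theorem fibers_map_range (I L : Ideal A) :
    Submodule.map
        (LinearMap.lcomp A (A ⧸ (I + L)) (Submodule.comap I.subtype (I ^ 2 + I * L)).mkQ)
        (LinearMap.range (qRes A L I)) = vanishOnInter A L I := by
  ext f
  simp only [Submodule.mem_map, LinearMap.mem_range]
  constructor
  · rintro ⟨-, ⟨g, rfl⟩, rfl⟩
    rw [mem_vanishOnInter]
    intro x hx
    simp only [qRes, LinearMap.lcomp_apply, Submodule.mkQ_apply]
    have h0 : qIota A L I (Submodule.Quotient.mk x) = 0 := by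
      rw [qIota, Submodule.liftQ_apply, LinearMap.comp_apply, Submodule.mkQ_apply,
        Submodule.Quotient.mk_eq_zero]
      show ((Submodule.inclusion (le_sup_left : I ≤ I + L) x : ↥(I + L)) : A) ∈ I ^ 2 + L
      rw [Submodule.coe_inclusion, Submodule.add_eq_sup]
      exact Submodule.mem_sup_right hx.2
    rw [h0, map_zero]
  · intro hf
    rw [mem_vanishOnInter] at hf
    refine ⟨qRes A L I (Submodule.liftQ _ (extHom I L f hf)
      (fun z hz => LinearMap.mem_ker.mpr (extHom_kills I L f hf z hz))), ⟨_, rfl⟩, ?_⟩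
    ext x
    simp only [qRes, LinearMap.lcomp_apply, Submodule.mkQ_apply]
    rw [qIota, Submodule.liftQ_apply, LinearMap.comp_apply, Submodule.mkQ_apply,
      Submodule.liftQ_apply]
    exact extHom_incl I L f hf x

end Aux2

/-- With `J = I + L`: every `A`-linear map `f : I → A/J` vanishes on
`I² + I·L`; hence precomposition with the projection `I → I/(I²+I·L)` is a bijection
`Hom_A(I/(I²+I·L), A/J) ≅ Hom_A(I, A/J)`; under this identification the image of the
restriction map `Hom_A((I+L)/(I²+L), A/J) → Hom_A(I/(I²+I·L), A/J)` corresponds to the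
submodule of maps vanishing on `I ∩ L`; consequently `Q(L,I)` is isomorphic as an
`A`-module to `Hom_A(I, A/J)` modulo that submodule. -/
theorem fibers_stmt0 {A : Type*} [CommRing A] (I L : Ideal A) :
    (∀ f : ↥I →ₗ[A] A ⧸ (I + L), ∀ x : ↥I, (x : A) ∈ I ^ 2 + I * L → f x = 0) ∧
    Function.Bijective
      (LinearMap.lcomp A (A ⧸ (I + L)) (Submodule.comap I.subtype (I ^ 2 + I * L)).mkQ) ∧
    Submodule.map
        (LinearMap.lcomp A (A ⧸ (I + L)) (Submodule.comap I.subtype (I ^ 2 + I * L)).mkQ)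
        (LinearMap.range (qRes A L I)) = vanishOnInter A L I ∧
    Nonempty (Qmod A L I ≃ₗ[A] (↥I →ₗ[A] A ⧸ (I + L)) ⧸ vanishOnInter A L I) := by
  refine ⟨fun f x hx => vanish_aux I L f x hx, fibers_bij I L, fibers_map_range I L, ⟨?_⟩⟩
  refine Submodule.Quotient.equiv (LinearMap.range (qRes A L I)) (vanishOnInter A L I)
    (LinearEquiv.ofBijective _ (fibers_bij I L)) ?_
  exact fibers_map_range I L
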